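/- The kernel of the ring homomorphism h: ℂ[p1,p2,p3,p4,u,v,t1,t2] → ℂ[p1,p2,p3,p4,t1,w] sending u ↦ w·p1 + w²·p2, v ↦ w·p3 + w²·p4, t2 ↦ w³ + t1·w (and fixing p1,p2,p3,p4,t1) contains every 3×3 minor of the matrix M, and the quotient by this kernel is an integral domain (so the image scheme D is integral). -/

import Mathlib

open MvPolynomial

/-- Variables: `0=p1, 1=p2, 2=p3, 3=p4, 4=u, 5=v, 6=t1, 7=t2`. -/
noncomputable def matM : Matrix (Fin 3) (Fin 6) (MvPolynomial (Fin 8) ℂ) :=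
  Matrix.of
    ![![X 4, X 5, -(X 7 * X 1), -(X 7 * X 3), -(X 7 * X 0) + X 6 * X 4, -(X 7 * X 2) + X 6 * X 5],
      ![-(X 0), -(X 2), X 4 + X 6 * X 1, X 5 + X 6 * X 3, -(X 7 * X 1), -(X 7 * X 3)],
      ![-(X 1), -(X 3), -(X 0), -(X 2), X 4, X 5]]

/-- The ring homomorphism `h : ℂ[p1,p2,p3,p4,u,v,t1,t2] → ℂ[p1,p2,p3,p4,t1,w]`,
`u ↦ w·p1+w²·p2`, `v ↦ w·p3+w²·p4`, `t2 ↦ w³+t1·w`, fixing `p1,p2,p3,p4,t1`. -/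
noncomputable def hHom : MvPolynomial (Fin 8) ℂ →+* MvPolynomial (Fin 6) ℂ :=
  (MvPolynomial.aeval
    (![X 0, X 1, X 2, X 3, X 5 * X 0 + X 5 ^ 2 * X 1, X 5 * X 2 + X 5 ^ 2 * X 3, X 4,
      X 5 ^ 3 + X 4 * X 5] : Fin 8 → MvPolynomial (Fin 6) ℂ)).toRingHom

lemma det3_zero {R : Type*} [CommRing R] (N : Matrix (Fin 3) (Fin 3) R) (a b : R)
    (h : ∀ j, N 0 j = a * N 1 j + b * N 2 j) : N.det = 0 := by
  rw [Matrix.det_fin_three, h 0, h 1, h 2]; ring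

set_option maxHeartbeats 2000000 in
/-- The kernel of `h` contains every 3×3 minor of `M`, and the quotient by this kernel
is an integral domain (so the image scheme `D` is integral). -/
theorem stmt3 :
    (∀ c : Fin 3 → Fin 6, (matM.submatrix id c).det ∈ RingHom.ker hHom) ∧
    IsDomain (MvPolynomial (Fin 8) ℂ ⧸ RingHom.ker hHom) := by
  have e : ∀ i : Fin 8, hHom (X i) =
      ![X 0, X 1, X 2, X 3, X 5 * X 0 + X 5 ^ 2 * X 1, X 5 * X 2 + X 5 ^ 2 * X 3, X 4,
        X 5 ^ 3 + X 4 * X 5] i := fun i => by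
    simp only [hHom, AlgHom.toRingHom_eq_coe, RingHom.coe_coe, aeval_X]
  have e0 : hHom (X 0) = X 0 := e 0
  have e1 : hHom (X 1) = X 1 := e 1
  have e2 : hHom (X 2) = X 2 := e 2
  have e3 : hHom (X 3) = X 3 := e 3
  have e4 : hHom (X 4) = X 5 * X 0 + X 5 ^ 2 * X 1 := e 4
  have e5 : hHom (X 5) = X 5 * X 2 + X 5 ^ 2 * X 3 := e 5
  have e6 : hHom (X 6) = X 4 := e 6
  have e7 : hHom (X 7) = X 5 ^ 3 + X 4 * X 5 := e 7
  constructor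
  · intro c
    rw [RingHom.mem_ker, RingHom.map_det]
    apply det3_zero _ (-(X 5)) (-(X 5 ^ 2))
    intro j
    have key : ∀ k : Fin 6, hHom (matM 0 k)
        = -(X 5) * hHom (matM 1 k) + -(X 5 ^ 2) * hHom (matM 2 k) := by
      intro k
      fin_cases k <;> simp only [matM, Matrix.of_apply, Fin.zero_eta, Fin.mk_one, Fin.reduceFinMk, Matrix.cons_val, Matrix.cons_val_zero, Matrix.cons_val_one]
      · show hHom (X 4) = -(X 5) * hHom (-(X 0)) + -(X 5 ^ 2) * hHom (-(X 1))
        simp only [map_neg, map_add, map_mul, e0, e1, e4]; ring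
      · show hHom (X 5) = -(X 5) * hHom (-(X 2)) + -(X 5 ^ 2) * hHom (-(X 3))
        simp only [map_neg, map_add, map_mul, e2, e3, e5]; ring
      · show hHom (-(X 7 * X 1)) = -(X 5) * hHom (X 4 + X 6 * X 1) + -(X 5 ^ 2) * hHom (-(X 0))
        simp only [map_neg, map_add, map_mul, e0, e1, e4, e6, e7]; ring
      · show hHom (-(X 7 * X 3)) = -(X 5) * hHom (X 5 + X 6 * X 3) + -(X 5 ^ 2) * hHom (-(X 2))
        simp only [map_neg, map_add, map_mul, e2, e3, e5, e6, e7]; ring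
      · show hHom (-(X 7 * X 0) + X 6 * X 4) = -(X 5) * hHom (-(X 7 * X 1)) + -(X 5 ^ 2) * hHom (X 4)
        simp only [map_neg, map_add, map_mul, e0, e1, e4, e6, e7]; ring
      · show hHom (-(X 7 * X 2) + X 6 * X 5) = -(X 5) * hHom (-(X 7 * X 3)) + -(X 5 ^ 2) * hHom (X 5)
        simp only [map_neg, map_add, map_mul, e2, e3, e5, e6, e7]; ring
    simpa [Matrix.submatrix_apply, Matrix.map_apply] using key (c j)
  · haveI := RingHom.ker_isPrime hHom
    exact Ideal.Quotient.isDomain _
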